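/- Let α ∈ (0,1), θ = α/(1−α), and let u : [0,∞) → ℝ be continuously differentiable with |u(t)| ≤ M e^{wt} and |u′(t)| ≤ M e^{wt} for some M > 0, w ≥ 0. Then for every λ > max(w, 0), ∫₀^∞ e^{−λx} [(1/(1−α)) ∫₀^x u′(τ) e^{−θ(x−τ)} dτ] dx = (1/(α + λ(1−α))) (λ ũ(λ) − u(0)), where ũ(λ) = ∫₀^∞ e^{−λx} u(x) dx. -/

import Mathlib

/-!
The inner integral is `H x = e^{-θx} ∫₀^x u'(τ) e^{θτ} dτ`, which solves `H' = u' - θ H`,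
`H 0 = 0` and, like `u'`, is of exponential order `w`. The rule `L[f'](λ) = λ L[f](λ) - f 0`
(integration by parts on `(0, ∞)`) applied to `H` gives `(λ + θ) L[H] = L[u']`, and applied to
`u` gives `L[u'] = λ ũ(λ) - u 0`; finally `(1 - α)(λ + θ) = α + λ(1 - α)`.
-/

open MeasureTheory Set Real Filter
open scoped Topology

noncomputable def laplace (f : ℝ → ℝ) (l : ℝ) : ℝ := ∫ x in Ioi 0, exp (-l * x) * f x

noncomputable def expConv (θ : ℝ) (g : ℝ → ℝ) (x : ℝ) : ℝ :=
  ∫ τ in 0..x, g τ * exp (-θ * (x - τ))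

lemma integral_exp_mul_of_ne_zero {c : ℝ} (hc : c ≠ 0) (x : ℝ) :
    ∫ τ in 0..x, exp (c * τ) = (exp (c * x) - 1) / c := by
  rw [intervalIntegral.integral_comp_mul_left (fun τ ↦ exp τ) hc, integral_exp, mul_zero, exp_zero,
    smul_eq_mul, inv_mul_eq_div]

section ExponentialOrder

variable {f f' : ℝ → ℝ} {C C' w l : ℝ}

lemma abs_exp_neg_mul_mul_le (hf : ∀ x, 0 ≤ x → |f x| ≤ C * exp (w * x)) {x : ℝ} (hx : 0 ≤ x) :
    |exp (-l * x) * f x| ≤ C * exp (-(l - w) * x) := by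
  rw [abs_mul, abs_exp]
  calc exp (-l * x) * |f x| ≤ exp (-l * x) * (C * exp (w * x)) :=
        mul_le_mul_of_nonneg_left (hf x hx) (exp_pos _).le
    _ = C * exp (-(l - w) * x) := by rw [mul_left_comm, ← exp_add]; ring_nf

lemma integrableOn_exp_neg_mul_mul (hf_cont : Continuous f)
    (hf : ∀ x, 0 ≤ x → |f x| ≤ C * exp (w * x)) (hwl : w < l) :
    IntegrableOn (fun x ↦ exp (-l * x) * f x) (Ioi 0) := by
  refine Integrable.mono' ((exp_neg_integrableOn_Ioi 0 (sub_pos.2 hwl)).const_mul C)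
    (by fun_prop : Continuous fun x ↦ exp (-l * x) * f x).aestronglyMeasurable ?_
  filter_upwards [ae_restrict_mem measurableSet_Ioi] with x hx
  exact abs_exp_neg_mul_mul_le hf (le_of_lt hx)

lemma tendsto_exp_neg_mul_mul_atTop (hf : ∀ x, 0 ≤ x → |f x| ≤ C * exp (w * x)) (hwl : w < l) :
    Tendsto (fun x ↦ exp (-l * x) * f x) atTop (𝓝 0) := by
  have hdecay : Tendsto (fun x ↦ C * exp (-(l - w) * x)) atTop (𝓝 0) := by
    simpa using (tendsto_exp_atBot.comp
      (tendsto_id.const_mul_atTop_of_neg (by linarith : -(l - w) < 0))).const_mul C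
  refine squeeze_zero_norm' ?_ hdecay
  filter_upwards [eventually_ge_atTop 0] with x hx
  exact abs_exp_neg_mul_mul_le hf hx

theorem laplace_deriv (hderiv : ∀ x, HasDerivAt f (f' x) x) (hf'_cont : Continuous f')
    (hf : ∀ x, 0 ≤ x → |f x| ≤ C * exp (w * x)) (hf' : ∀ x, 0 ≤ x → |f' x| ≤ C' * exp (w * x))
    (hwl : w < l) :
    laplace f' l = l * laplace f l - f 0 := by
  have hf_cont : Continuous f := continuous_iff_continuousAt.2 fun x ↦ (hderiv x).continuousAt
  have hprod : ∀ x ∈ Ici (0 : ℝ), HasDerivAt (fun x ↦ exp (-l * x) * f x)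
      (exp (-l * x) * f' x - l * (exp (-l * x) * f x)) x := by
    intro x _
    have hexp : HasDerivAt (fun x ↦ exp (-l * x)) (exp (-l * x) * -l) x := by
      simpa using ((hasDerivAt_id x).const_mul (-l)).exp
    exact (hexp.mul (hderiv x)).congr_deriv (by ring)
  have hint_f := integrableOn_exp_neg_mul_mul hf_cont hf hwl
  have hint_f' := integrableOn_exp_neg_mul_mul hf'_cont hf' hwl
  have hftc := integral_Ioi_of_hasDerivAt_of_tendsto' hprod (hint_f'.sub (hint_f.const_mul l))
    (tendsto_exp_neg_mul_mul_atTop hf hwl)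
  rw [integral_sub hint_f' (hint_f.const_mul l), MeasureTheory.integral_const_mul] at hftc
  simp only [mul_zero, exp_zero, one_mul, zero_sub] at hftc
  unfold laplace
  linarith

end ExponentialOrder

section ExpConv

variable {θ : ℝ} {g : ℝ → ℝ}

lemma expConv_eq (θ : ℝ) (g : ℝ → ℝ) (x : ℝ) :
    expConv θ g x = exp (-θ * x) * ∫ τ in 0..x, g τ * exp (θ * τ) := by
  rw [expConv, ← intervalIntegral.integral_const_mul]
  congr 1 with τ
  rw [show -θ * (x - τ) = -θ * x + θ * τ by ring, exp_add]
  ring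

lemma hasDerivAt_expConv (hg : Continuous g) (x : ℝ) :
    HasDerivAt (expConv θ g) (g x - θ * expConv θ g x) x := by
  have hprim := (by fun_prop : Continuous fun τ ↦ g τ * exp (θ * τ)).integral_hasStrictDerivAt 0 x
  have hexp : HasDerivAt (fun x ↦ exp (-θ * x)) (exp (-θ * x) * -θ) x := by
    simpa using ((hasDerivAt_id x).const_mul (-θ)).exp
  rw [expConv_eq θ g x, funext (expConv_eq θ g)]
  refine (hexp.mul hprim.hasDerivAt).congr_deriv ?_
  rw [mul_left_comm, ← exp_add, neg_mul, neg_add_cancel, exp_zero]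
  ring

lemma abs_expConv_le {M w : ℝ} (hg : ∀ x, 0 ≤ x → |g x| ≤ M * exp (w * x)) (hwθ : 0 < w + θ)
    {x : ℝ} (hx : 0 ≤ x) :
    |expConv θ g x| ≤ M / (w + θ) * exp (w * x) := by
  have hM : 0 ≤ M := by simpa using (abs_nonneg _).trans (hg 0 le_rfl)
  have hprim : ‖∫ τ in 0..x, g τ * exp (θ * τ)‖ ≤ ∫ τ in 0..x, M * exp ((w + θ) * τ) := by
    refine intervalIntegral.norm_integral_le_of_norm_le hx (Eventually.of_forall fun τ hτ ↦ ?_)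
      (Continuous.intervalIntegrable (by fun_prop) 0 x)
    rw [Real.norm_eq_abs, abs_mul, abs_exp]
    calc |g τ| * exp (θ * τ) ≤ M * exp (w * τ) * exp (θ * τ) :=
          mul_le_mul_of_nonneg_right (hg τ hτ.1.le) (exp_pos _).le
      _ = M * exp ((w + θ) * τ) := by rw [mul_assoc, ← exp_add]; ring_nf
  rw [Real.norm_eq_abs, intervalIntegral.integral_const_mul,
    integral_exp_mul_of_ne_zero hwθ.ne'] at hprim
  rw [expConv_eq, abs_mul, abs_exp]
  calc exp (-θ * x) * |∫ τ in 0..x, g τ * exp (θ * τ)|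
      ≤ exp (-θ * x) * (M / (w + θ) * exp ((w + θ) * x)) := by
        gcongr
        refine hprim.trans ?_
        rw [mul_div_assoc', div_mul_eq_mul_div]
        gcongr
        linarith
    _ = M / (w + θ) * exp (w * x) := by rw [mul_left_comm, ← exp_add]; ring_nf

theorem laplace_expConv {M w l : ℝ} (hg_cont : Continuous g)
    (hg : ∀ x, 0 ≤ x → |g x| ≤ M * exp (w * x)) (hwθ : 0 < w + θ) (hwl : w < l) :
    laplace (expConv θ g) l = laplace g l / (l + θ) := by
  have hconv_cont : Continuous (expConv θ g) :=
    continuous_iff_continuousAt.2 fun x ↦ (hasDerivAt_expConv hg_cont x).continuousAt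
  have hconv_le : ∀ x, 0 ≤ x → |expConv θ g x| ≤ M / (w + θ) * exp (w * x) :=
    fun _ ↦ abs_expConv_le hg hwθ
  have hderiv_le : ∀ x, 0 ≤ x →
      |g x - θ * expConv θ g x| ≤ (M + |θ| * (M / (w + θ))) * exp (w * x) := by
    intro x hx
    calc |g x - θ * expConv θ g x| ≤ |g x| + |θ| * |expConv θ g x| := by
          rw [← abs_mul]; exact abs_sub _ _
      _ ≤ M * exp (w * x) + |θ| * (M / (w + θ) * exp (w * x)) := by
          gcongr
          exacts [hg x hx, hconv_le x hx]
      _ = _ := by ring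
  have hderiv := laplace_deriv (hasDerivAt_expConv hg_cont) (by fun_prop) hconv_le hderiv_le hwl
  have hsplit : laplace (fun x ↦ g x - θ * expConv θ g x) l
      = laplace g l - θ * laplace (expConv θ g) l := by
    simp only [laplace, mul_sub, mul_left_comm _ θ]
    rw [integral_sub (integrableOn_exp_neg_mul_mul hg_cont hg hwl)
      ((integrableOn_exp_neg_mul_mul hconv_cont hconv_le hwl).const_mul θ),
      MeasureTheory.integral_const_mul]
  have hconv_zero : expConv θ g 0 = 0 := by simp [expConv]
  rw [hsplit, hconv_zero, sub_zero] at hderiv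
  rw [eq_div_iff (by linarith)]
  linarith

end ExpConv

theorem stmt_14_general (α θ : ℝ) (hα : α ∈ Ioo (0:ℝ) 1) (hθ : θ = α / (1 - α))
    (M w : ℝ) (hw : 0 ≤ w)
    (u : ℝ → ℝ) (hu : ContDiff ℝ 1 u)
    (hub : ∀ t : ℝ, 0 ≤ t → |u t| ≤ M * Real.exp (w * t))
    (hu'b : ∀ t : ℝ, 0 ≤ t → |deriv u t| ≤ M * Real.exp (w * t)) :
    ∀ l : ℝ, max w 0 < l →
      ∫ x in Ioi (0:ℝ),
          Real.exp (-l * x) *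
            ((1 / (1 - α)) * ∫ τ in (0:ℝ)..x, deriv u τ * Real.exp (-θ * (x - τ)))
        = (1 / (α + l * (1 - α))) *
            (l * (∫ x in Ioi (0:ℝ), Real.exp (-l * x) * u x) - u 0) := by
  intro l hl
  obtain ⟨hα0, hα1⟩ := hα
  have hwl : w < l := (le_max_left w 0).trans_lt hl
  have hθ0 : 0 < θ := hθ ▸ div_pos hα0 (sub_pos.2 hα1)
  have hu' : Continuous (deriv u) := hu.continuous_deriv le_rfl
  have hderiv : ∀ x, HasDerivAt u (deriv u x) x :=
    fun x ↦ ((hu.differentiable one_ne_zero) x).hasDerivAt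
  have hconv := laplace_expConv (θ := θ) hu' hu'b (by linarith) hwl
  rw [laplace_deriv hderiv hu' hub hu'b hwl] at hconv
  calc ∫ x in Ioi 0, exp (-l * x) * ((1 / (1 - α)) * expConv θ (deriv u) x)
      = 1 / (1 - α) * laplace (expConv θ (deriv u)) l := by
        rw [laplace, ← MeasureTheory.integral_const_mul]
        simp only [mul_left_comm]
    _ = 1 / (α + l * (1 - α)) * (l * laplace u l - u 0) := by
        rw [hconv, hθ]
        have h1α : 0 < 1 - α := sub_pos.2 hα1
        have hden : 0 < α + l * (1 - α) := by nlinarith [(le_max_right w 0).trans_lt hl]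
        field_simp
        ring

/-- Laplace transform of the Caputo–Fabrizio operator (`M(α)=1`, `a=0`): for
`u ∈ C¹` of exponential order `w` (with derivative of exponential order `w`),
`θ = α/(1−α)` and `λ > max(w,0)`,
`∫₀^∞ e^{−λx} [(1/(1−α)) ∫₀^x u′(τ) e^{−θ(x−τ)} dτ] dx
   = (λ ũ(λ) − u(0)) / (α + λ(1−α))`. -/
theorem stmt_14 (α θ : ℝ) (hα : α ∈ Ioo (0:ℝ) 1) (hθ : θ = α / (1 - α))
    (M w : ℝ) (hM : 0 < M) (hw : 0 ≤ w)
    (u : ℝ → ℝ) (hu : ContDiff ℝ 1 u)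
    (hub : ∀ t : ℝ, 0 ≤ t → |u t| ≤ M * Real.exp (w * t))
    (hu'b : ∀ t : ℝ, 0 ≤ t → |deriv u t| ≤ M * Real.exp (w * t)) :
    ∀ l : ℝ, max w 0 < l →
      ∫ x in Ioi (0:ℝ),
          Real.exp (-l * x) *
            ((1 / (1 - α)) * ∫ τ in (0:ℝ)..x, deriv u τ * Real.exp (-θ * (x - τ)))
        = (1 / (α + l * (1 - α))) *
            (l * (∫ x in Ioi (0:ℝ), Real.exp (-l * x) * u x) - u 0) :=
  stmt_14_general α θ hα hθ M w hw u hu hub hu'b
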